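/- arXiv:2201.03204 — 2 statements merged into one kernel-verified Lean document; each statement's English description precedes it below -/
import Mathlib

section
/- Fix θ ∈ (1,2). Let ψ: ℝ → ℝ be defined by ψ(x) = -log(1 - x + |x|^θ/θ) for 0 ≤ x ≤ 1, ψ(x) = log θ for x ≥ 1, and ψ(x) = -ψ(-x) for x ≤ 0. Then for all x ∈ ℝ, -log(1 - x + |x|^θ/θ) ≤ ψ(x) ≤ log(1 + x + |x|^θ/θ). -/
/-!
Write `f(t) = 1 - t + t^θ/θ` and `g(t) = 1 + t + t^θ/θ` for `t ≥ 0`. Since `ψ` is odd and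
`x ↦ -x` swaps `f` and `g`, it suffices to show `-log f(t) ≤ ψ(t) ≤ log g(t)` for `t ≥ 0`.
Each inequality `-log a ≤ log b` amounts to `1 ≤ a b`. On `[0, 1]` this is `f g ≥ 1`, which
holds because `t² ≤ t^θ ≤ 2 t^θ/θ` for `θ ≤ 2`; for `t ≥ 1` the lower bound is
`θ f(t) ≥ 1`, Bernoulli's inequality, and the upper bound is `θ < 2 ≤ g(t)`.
-/

open Real

lemma neg_log_le_log_of_one_le_mul {a b : ℝ} (ha : 0 < a) (hb : 0 < b) (h : 1 ≤ a * b) :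
    -log a ≤ log b := by
  have : 0 ≤ log a + log b := by
    rw [← log_mul ha.ne' hb.ne']
    exact log_nonneg h
  linarith

lemma one_le_mul_one_sub_add_rpow_div {θ t : ℝ} (hθ : 1 ≤ θ) (ht : 0 ≤ t) :
    1 ≤ θ * (1 - t + t ^ θ / θ) := by
  have bernoulli := one_add_mul_self_le_rpow_one_add (by linarith : (-1 : ℝ) ≤ t - 1) hθ
  rw [add_sub_cancel] at bernoulli
  have hθ0 : θ ≠ 0 := by positivity
  rw [mul_add, mul_div_cancel₀ _ hθ0]
  nlinarith

lemma one_sub_add_rpow_div_pos {θ t : ℝ} (hθ : 1 ≤ θ) (ht : 0 ≤ t) :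
    0 < 1 - t + t ^ θ / θ :=
  pos_of_mul_pos_right (one_pos.trans_le (one_le_mul_one_sub_add_rpow_div hθ ht)) (by linarith)

lemma one_le_one_sub_add_rpow_div_mul_one_add_add_rpow_div {θ t : ℝ} (hθ0 : 0 < θ)
    (hθ2 : θ ≤ 2) (ht : 0 ≤ t) (ht1 : t ≤ 1) :
    1 ≤ (1 - t + t ^ θ / θ) * (1 + t + t ^ θ / θ) := by
  have sq_le_rpow : t ^ 2 ≤ t ^ θ := by
    rw [← rpow_two]
    exact rpow_le_rpow_of_exponent_ge' ht ht1 hθ0.le hθ2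
  have sq_le : t ^ 2 ≤ 2 * (t ^ θ / θ) := by
    rw [mul_div_assoc', le_div_iff₀ hθ0]
    nlinarith [rpow_nonneg ht θ]
  nlinarith [sq_nonneg (t ^ θ / θ)]

lemma neg_log_le_and_le_log_of_nonneg {θ : ℝ} (hθ1 : 1 < θ) (hθ2 : θ ≤ 2) {ψ : ℝ → ℝ}
    (h1 : ∀ x : ℝ, 0 ≤ x → x ≤ 1 → ψ x = -log (1 - x + |x| ^ θ / θ))
    (h2 : ∀ x : ℝ, 1 ≤ x → ψ x = log θ) {t : ℝ} (ht : 0 ≤ t) :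
    -log (1 - t + t ^ θ / θ) ≤ ψ t ∧ ψ t ≤ log (1 + t + t ^ θ / θ) := by
  have hθ0 : 0 < θ := by linarith
  have hf := one_sub_add_rpow_div_pos hθ1.le ht
  have hg : 0 < 1 + t + t ^ θ / θ := by linarith [div_nonneg (rpow_nonneg ht θ) hθ0.le]
  rcases le_total t 1 with ht1 | ht1
  · rw [h1 t ht ht1, abs_of_nonneg ht]
    exact ⟨le_rfl, neg_log_le_log_of_one_le_mul hf hg
      (one_le_one_sub_add_rpow_div_mul_one_add_add_rpow_div hθ0 hθ2 ht ht1)⟩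
  · rw [h2 t ht1]
    refine ⟨neg_log_le_log_of_one_le_mul hf hθ0 ?_, log_le_log hθ0 (by linarith)⟩
    rw [mul_comm]
    exact one_le_mul_one_sub_add_rpow_div hθ1.le ht

/-- The truncation function ψ for the θ-th moment case (1 < θ < 2) satisfies the
sandwich inequality. -/
theorem stmt_2 (θ : ℝ) (hθ1 : 1 < θ) (hθ2 : θ < 2) (ψ : ℝ → ℝ)
    (h1 : ∀ x : ℝ, 0 ≤ x → x ≤ 1 → ψ x = -Real.log (1 - x + |x| ^ θ / θ))
    (h2 : ∀ x : ℝ, 1 ≤ x → ψ x = Real.log θ)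
    (h3 : ∀ x : ℝ, x ≤ 0 → ψ x = -ψ (-x)) :
    ∀ x : ℝ, -Real.log (1 - x + |x| ^ θ / θ) ≤ ψ x ∧ ψ x ≤ Real.log (1 + x + |x| ^ θ / θ) := by
  intro x
  rcases le_total 0 x with hx | hx
  · rw [abs_of_nonneg hx]
    exact neg_log_le_and_le_log_of_nonneg hθ1 hθ2.le h1 h2 hx
  · obtain ⟨lower, upper⟩ :=
      neg_log_le_and_le_log_of_nonneg hθ1 hθ2.le h1 h2 (neg_nonneg.mpr hx)
    rw [h3 x hx, abs_of_nonpos hx, ← sub_neg_eq_add 1 x, sub_eq_add_neg 1 x]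
    exact ⟨neg_le_neg upper, by linarith⟩
end

section
/- Let (x_i, y_i), i = 1,…,n, be i.i.d. samples from D, let ι > 0, let w be fixed, and let ψ satisfy ψ(t) ≥ -log(1 - t + t²/2) for all t ≥ 0. Then E[exp(-Σ_{i=1}^n ψ(ι|y_i - ⟨x_i, w⟩|))] ≤ exp(n(-ι L(w) + (ι²/2) E(y - ⟨x, w⟩)²)), where L(w) = E|y - ⟨x, w⟩|. -/
open MeasureTheory
open scoped RealInnerProductSpace

/-!
Write `Z = Y - ⟪X, w⟫` and `t = ι |Z| ≥ 0`. The hypothesis on `ψ` says exactly that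
`exp (-ψ t) ≤ 1 - t + t ^ 2 / 2`, and the right-hand side is positive. Bounding each of the
`n` factors of `exp (-∑ ψ) = ∏ exp (-ψ)` this way and integrating over the product measure,
the expectation is at most `(E [1 - t + t ^ 2 / 2]) ^ n = (1 + u) ^ n` with
`u = -ι E|Z| + ι ^ 2 / 2 E Z ^ 2`, and `1 + u ≤ exp u`.
-/

lemma one_sub_add_sq_div_two_pos (t : ℝ) : 0 < 1 - t + t ^ 2 / 2 := by
  nlinarith [sq_nonneg (t - 1)]

lemma exp_neg_le_one_sub_add_sq_div_two {t s : ℝ} (h : -Real.log (1 - t + t ^ 2 / 2) ≤ s) :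
    Real.exp (-s) ≤ 1 - t + t ^ 2 / 2 := by
  calc Real.exp (-s) ≤ Real.exp (Real.log (1 - t + t ^ 2 / 2)) := Real.exp_le_exp.2 (by linarith)
    _ = 1 - t + t ^ 2 / 2 := Real.exp_log (one_sub_add_sq_div_two_pos t)

lemma one_add_pow_le_exp_mul {u : ℝ} (hu : 0 ≤ 1 + u) (n : ℕ) :
    (1 + u) ^ n ≤ Real.exp (n * u) := by
  rw [Real.exp_nat_mul]
  exact pow_le_pow_left₀ hu (by linarith [Real.add_one_le_exp u]) n

lemma integral_pi_prod_le_pow {Ω ι : Type*} [Fintype ι] [MeasurableSpace Ω] {μ : Measure Ω}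
    [SigmaFinite μ] {f g : Ω → ℝ} (hg : Integrable g μ) (hf : ∀ x, 0 ≤ f x)
    (hfg : ∀ x, f x ≤ g x) :
    ∫ x : ι → Ω, ∏ i, f (x i) ∂Measure.pi (fun _ => μ) ≤ (∫ x, g x ∂μ) ^ Fintype.card ι := by
  rw [← integral_fintype_prod_eq_pow]
  refine integral_mono_of_nonneg (.of_forall fun x => Finset.prod_nonneg fun i _ => hf _)
    (Integrable.fintype_prod (f := fun _ => g) fun _ => hg) (.of_forall fun x => ?_)
  exact Finset.prod_le_prod (fun i _ => hf _) fun i _ => hfg _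

lemma mul_abs_sq_div_two (c z : ℝ) : (c * |z|) ^ 2 / 2 = c ^ 2 / 2 * z ^ 2 := by
  rw [mul_pow, sq_abs]; ring

lemma integral_one_sub_add_sq_div_two {Ω : Type*} [MeasurableSpace Ω] {μ : Measure Ω}
    [IsProbabilityMeasure μ] {Z : Ω → ℝ} (hL : Integrable (fun ω => |Z ω|) μ)
    (h2 : Integrable (fun ω => Z ω ^ 2) μ) (c : ℝ) :
    ∫ ω, 1 - c * |Z ω| + (c * |Z ω|) ^ 2 / 2 ∂μ =
      1 + (-(c * ∫ ω, |Z ω| ∂μ) + c ^ 2 / 2 * ∫ ω, Z ω ^ 2 ∂μ) := by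
  have hlin : Integrable (fun ω => 1 - c * |Z ω|) μ := (integrable_const 1).sub (hL.const_mul c)
  simp_rw [mul_abs_sq_div_two]
  rw [integral_add hlin (h2.const_mul _), integral_sub (integrable_const 1) (hL.const_mul c),
    integral_const, integral_const_mul, integral_const_mul]
  simp only [probReal_univ, smul_eq_mul, mul_one]
  ring

lemma integrable_one_sub_add_sq_div_two {Ω : Type*} [MeasurableSpace Ω] {μ : Measure Ω}
    [IsFiniteMeasure μ] {Z : Ω → ℝ} (hL : Integrable (fun ω => |Z ω|) μ)
    (h2 : Integrable (fun ω => Z ω ^ 2) μ) (c : ℝ) :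
    Integrable (fun ω => 1 - c * |Z ω| + (c * |Z ω|) ^ 2 / 2) μ := by
  simp_rw [mul_abs_sq_div_two]
  exact ((integrable_const 1).sub (hL.const_mul c)).add (h2.const_mul _)

theorem stmt_11_general {d n : ℕ} {Ω : Type*} [MeasurableSpace Ω] (μ : Measure Ω)
    [IsProbabilityMeasure μ] (X : Ω → EuclideanSpace ℝ (Fin d)) (Y : Ω → ℝ)
    (w : EuclideanSpace ℝ (Fin d)) (ι : ℝ) (hι : 0 < ι) (ψ : ℝ → ℝ)
    (hψ : ∀ t : ℝ, 0 ≤ t → -Real.log (1 - t + t ^ 2 / 2) ≤ ψ t)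
    (hL : Integrable (fun ω => |Y ω - ⟪X ω, w⟫|) μ)
    (h2 : Integrable (fun ω => (Y ω - ⟪X ω, w⟫) ^ 2) μ) :
    (∫ ω : Fin n → Ω, Real.exp (-∑ i, ψ (ι * |Y (ω i) - ⟪X (ω i), w⟫|))
        ∂(Measure.pi fun _ => μ)) ≤
      Real.exp (n * (-(ι * ∫ ω, |Y ω - ⟪X ω, w⟫| ∂μ) +
        ι ^ 2 / 2 * ∫ ω, (Y ω - ⟪X ω, w⟫) ^ 2 ∂μ)) := by
  set Z : Ω → ℝ := fun ω => Y ω - ⟪X ω, w⟫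
  have hfactor (ω : Ω) : Real.exp (-ψ (ι * |Z ω|)) ≤ 1 - ι * |Z ω| + (ι * |Z ω|) ^ 2 / 2 :=
    exp_neg_le_one_sub_add_sq_div_two (hψ _ (by positivity))
  have hmean := integral_one_sub_add_sq_div_two (μ := μ) hL h2 ι
  calc (∫ ω : Fin n → Ω, Real.exp (-∑ i, ψ (ι * |Z (ω i)|)) ∂(Measure.pi fun _ => μ))
      = ∫ ω : Fin n → Ω, ∏ i, Real.exp (-ψ (ι * |Z (ω i)|)) ∂(Measure.pi fun _ => μ) := by
        simp only [← Real.exp_sum, Finset.sum_neg_distrib]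
    _ ≤ (∫ ω, 1 - ι * |Z ω| + (ι * |Z ω|) ^ 2 / 2 ∂μ) ^ n := by
        simpa using integral_pi_prod_le_pow (ι := Fin n)
          (integrable_one_sub_add_sq_div_two hL h2 ι) (fun _ => (Real.exp_pos _).le) hfactor
    _ ≤ _ := by
        rw [hmean]
        exact one_add_pow_le_exp_mul
          (hmean ▸ integral_nonneg fun ω => (one_sub_add_sq_div_two_pos _).le) n

/-- MGF bound for minus the truncated empirical risk (second-moment case). -/
theorem stmt_11 {d n : ℕ} {Ω : Type*} [MeasurableSpace Ω] (μ : Measure Ω)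
    [IsProbabilityMeasure μ] (X : Ω → EuclideanSpace ℝ (Fin d)) (Y : Ω → ℝ)
    (hXm : Measurable X) (hYm : Measurable Y)
    (w : EuclideanSpace ℝ (Fin d)) (ι : ℝ) (hι : 0 < ι) (ψ : ℝ → ℝ)
    (hψ : ∀ t : ℝ, 0 ≤ t → -Real.log (1 - t + t ^ 2 / 2) ≤ ψ t)
    (hL : Integrable (fun ω => |Y ω - ⟪X ω, w⟫|) μ)
    (h2 : Integrable (fun ω => (Y ω - ⟪X ω, w⟫) ^ 2) μ) :
    (∫ ω : Fin n → Ω, Real.exp (-∑ i, ψ (ι * |Y (ω i) - ⟪X (ω i), w⟫|))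
        ∂(Measure.pi fun _ => μ)) ≤
      Real.exp (n * (-(ι * ∫ ω, |Y ω - ⟪X ω, w⟫| ∂μ) +
        ι ^ 2 / 2 * ∫ ω, (Y ω - ⟪X ω, w⟫) ^ 2 ∂μ)) :=
  stmt_11_general μ X Y w ι hι ψ hψ hL h2
end
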